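/- Let β be a Parry number whose minimal polynomial P_β is non-reciprocal and whose Parry polynomial n*_β satisfies ‖n*_β‖₂² ≤ θ₀⁴ = 3.0794…, where θ₀ is the unique real root greater than 1 of X³ − X − 1. Then every irreducible factor of the complementary factor n*_β(X)/P_β(X) in ℤ[X] is reciprocal; i.e. the factorization of n*_β contains no non-reciprocal irreducible factor other than P_β. -/

import Mathlib

open Polynomial

noncomputable section

/-- Iterates `T_β^j(1)` of the beta-transformation `T_β(x) = βx - ⌊βx⌋` at `1`. -/
def Titer (β : ℝ) : ℕ → ℝ
  | 0 => 1
  | j + 1 => Int.fract (β * Titer β j)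

/-- The digits `t_i = ⌊β · T_β^{i-1}(1)⌋` for `i ≥ 1` (junk value `0` at `i = 0`). -/
def tdigit (β : ℝ) : ℕ → ℤ
  | 0 => 0
  | i + 1 => ⌊β * Titer β i⌋

/-- The Parry polynomial of a simple Parry number with `d_β(1) = 0.t₁…t_m`. -/
def simpleParryPoly (β : ℝ) (m : ℕ) : Polynomial ℤ :=
  X ^ m - ∑ i ∈ Finset.Icc 1 m, C (tdigit β i) * X ^ (m - i)

/-- The Parry polynomial of a non-simple Parry number with preperiod `m`, period `p+1`. -/
def nonsimpleParryPoly (β : ℝ) (m p : ℕ) : Polynomial ℤ :=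
  X ^ (m + p + 1) - ∑ i ∈ Finset.Icc 1 (m + p + 1), C (tdigit β i) * X ^ (m + p + 1 - i)
    - X ^ m + ∑ i ∈ Finset.Icc 1 m, C (tdigit β i) * X ^ (m - i)

/-- `β` is a Parry number (non-integer, `> 1`, with eventually periodic digit sequence
`(t_i)`) and `P` is its Parry polynomial: either `β` is a simple Parry number with
`d_β(1) = 0.t₁…t_m` (`m` maximal with `t_m ≠ 0`), or `β` is a non-simple Parry number with
minimal preperiod length `m ≥ 0` and minimal period length `p+1 ≥ 1`. -/
def IsParryPolyOf (β : ℝ) (P : Polynomial ℤ) : Prop :=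
  1 < β ∧ (∀ n : ℤ, (n : ℝ) ≠ β) ∧
  ((∃ m : ℕ, 1 ≤ m ∧ tdigit β m ≠ 0 ∧ (∀ i, m < i → tdigit β i = 0) ∧
      P = simpleParryPoly β m) ∨
   ((∀ N : ℕ, ∃ i, N < i ∧ tdigit β i ≠ 0) ∧
    ∃ m p : ℕ,
      (∀ i, m + 1 ≤ i → tdigit β (i + (p + 1)) = tdigit β i) ∧
      (∀ q : ℕ, 0 < q → (∃ m', ∀ i, m' + 1 ≤ i → tdigit β (i + q) = tdigit β i) →
        p + 1 ≤ q) ∧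
      (∀ m', m' < m → ¬ (∀ i, m' + 1 ≤ i → tdigit β (i + (p + 1)) = tdigit β i)) ∧
      P = nonsimpleParryPoly β m p))

/-- The 2-norm of an integer polynomial. -/
def polyNorm2 (P : Polynomial ℤ) : ℝ :=
  Real.sqrt (∑ j ∈ Finset.range (P.natDegree + 1), ((P.coeff j : ℝ)) ^ 2)




open Finset

/-- the trinomial `X^N - X^(N-1) - 1` -/
def PnT (N : ℕ) : Polynomial ℤ := X^N - X^(N-1) - 1

lemma coeff_PnT {N : ℕ} (hN : 1 ≤ N) (j : ℕ) :
    (PnT N).coeff j = (if j = N then 1 else 0) - (if j = N-1 then 1 else 0)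
      - (if j = 0 then 1 else 0) := by
  simp [PnT, coeff_X_pow, coeff_one]

lemma natDegree_PnT {N : ℕ} (hN : 2 ≤ N) : (PnT N).natDegree = N := by
  apply le_antisymm
  · apply natDegree_le_iff_coeff_eq_zero.2
    intro j hj
    rw [coeff_PnT (by omega)]
    have h1 : ¬ (j = N) := by omega
    have h2 : ¬ (j = N-1) := by omega
    have h3 : ¬ (j = 0) := by omega
    simp [h1, h2, h3]
  · apply le_natDegree_of_ne_zero
    rw [coeff_PnT (by omega)]
    have h2 : ¬ (N = N-1) := by omega
    have h3 : ¬ (N = 0) := by omega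
    simp [h2, h3]

lemma PnT_ne_zero {N : ℕ} (hN : 2 ≤ N) : PnT N ≠ 0 := by
  intro h
  have := coeff_PnT (show 1 ≤ N by omega) N
  rw [h] at this
  have h2 : ¬ (N = N-1) := by omega
  have h3 : ¬ (N = 0) := by omega
  simp [h2, h3] at this

lemma leadingCoeff_PnT {N : ℕ} (hN : 2 ≤ N) : (PnT N).leadingCoeff = 1 := by
  rw [leadingCoeff, natDegree_PnT hN, coeff_PnT (by omega)]
  have h2 : ¬ (N = N-1) := by omega
  have h3 : ¬ (N = 0) := by omega
  simp [h2, h3]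

lemma reverse_PnT {N : ℕ} (hN : 2 ≤ N) : (PnT N).reverse = 1 - X - X^N := by
  rw [reverse, natDegree_PnT hN]
  rw [show PnT N = X^N - X^(N-1) - 1 from rfl]
  rw [reflect_sub, reflect_sub, reflect_monomial, reflect_monomial, reflect_one]
  rw [revAt_le (le_refl N), revAt_le (by omega : N - 1 ≤ N)]
  have : N - (N-1) = 1 := by omega
  simp [this]




lemma my_reverse_reverse (f : Polynomial ℤ) (hf : f.coeff 0 ≠ 0) : f.reverse.reverse = f := by
  have htr : f.natTrailingDegree = 0 := natTrailingDegree_eq_zero.2 (Or.inr hf)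
  have hdeg : f.reverse.natDegree = f.natDegree := by
    rw [reverse_natDegree, htr, Nat.sub_zero]
  ext j
  rw [coeff_reverse, coeff_reverse, hdeg]
  by_cases h : j ≤ f.natDegree
  · rw [revAt_le h, revAt_le (show f.natDegree - j ≤ f.natDegree by omega), Nat.sub_sub_self h]
  · rw [revAt_eq_self_of_lt (show f.natDegree < j by omega), revAt_eq_self_of_lt (show f.natDegree < j by omega)]

lemma coeff_mul_reverse_zero (f : Polynomial ℤ) :
    (f * f.reverse).coeff 0 = f.coeff 0 * f.leadingCoeff := by
  rw [mul_coeff_zero, coeff_zero_reverse]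

lemma coeff_mul_reverse_natDegree (f : Polynomial ℤ) :
    (f * f.reverse).coeff f.natDegree
      = ∑ i ∈ range (f.natDegree + 1), (f.coeff i)^2 := by
  rw [coeff_mul, Finset.Nat.sum_antidiagonal_eq_sum_range_succ_mk]
  apply Finset.sum_congr rfl
  intro k hk
  rw [mem_range] at hk
  have hk' : k ≤ f.natDegree := by omega
  rw [coeff_reverse, revAt_le (by omega : f.natDegree - k ≤ f.natDegree),
    Nat.sub_sub_self hk', sq]

lemma coeff_mul_reverse_high {f : Polynomial ℤ} {N : ℕ} (hN : 2 ≤ N)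
    (hdeg : f.natDegree = N) :
    (f * f.reverse).coeff (2*N-1)
      = f.coeff N * f.coeff 1 + f.coeff (N-1) * f.coeff 0 := by
  rw [coeff_mul, Finset.Nat.sum_antidiagonal_eq_sum_range_succ_mk]
  have hrev : f.reverse.natDegree ≤ N := hdeg ▸ reverse_natDegree_le f
  have hsub : ({N-1, N} : Finset ℕ) ⊆ range (2*N-1+1) := by
    intro x hx
    simp only [mem_insert, mem_singleton] at hx
    rw [mem_range]; omega
  rw [← Finset.sum_subset hsub]
  · rw [Finset.sum_pair (by omega : N - 1 ≠ N)]
    have e1 : 2*N-1-(N-1) = N := by omega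
    have e2 : 2*N-1-N = N-1 := by omega
    rw [e1, e2, coeff_reverse, coeff_reverse, hdeg,
      revAt_le (le_refl N), revAt_le (by omega : N - 1 ≤ N),
      Nat.sub_self, show N - (N-1) = 1 by omega]
    ring
  · intro k hk hknot
    simp only [mem_insert, mem_singleton] at hknot
    rw [mem_range] at hk
    push_neg at hknot
    by_cases hbig : N < k
    · rw [coeff_eq_zero_of_natDegree_lt (hdeg ▸ hbig), zero_mul]
    · have : N < 2*N-1-k := by omega
      rw [coeff_eq_zero_of_natDegree_lt (lt_of_le_of_lt hrev this), mul_zero]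


lemma sum_sq_PnT {N : ℕ} (hN : 2 ≤ N) :
    ∑ i ∈ range (N+1), ((PnT N).coeff i)^2 = 3 := by
  have hsub : ({0, N-1, N} : Finset ℕ) ⊆ range (N+1) := by
    intro x hx; simp only [mem_insert, mem_singleton] at hx; rw [mem_range]; omega
  rw [← Finset.sum_subset hsub]
  · rw [Finset.sum_insert (by simp; omega), Finset.sum_insert (by simp; omega),
      Finset.sum_singleton, coeff_PnT (by omega), coeff_PnT (by omega), coeff_PnT (by omega)]
    have h1 : ¬ (0 = N) := by omega
    have h2 : ¬ (0 = N-1) := by omega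
    have h3 : ¬ (N-1 = N) := by omega
    have h4 : ¬ (N-1 = 0) := by omega
    have h5 : ¬ (N = N-1) := by omega
    have h6 : ¬ (N = 0) := by omega
    simp [h1, h2, h3, h4, h5, h6]
  · intro k hk hknot
    simp only [mem_insert, mem_singleton] at hknot
    push_neg at hknot
    rw [coeff_PnT (by omega)]
    have h1 : ¬ (k = N) := hknot.2.2
    have h2 : ¬ (k = N-1) := hknot.2.1
    have h3 : ¬ (k = 0) := hknot.1
    simp [h1, h2, h3]

lemma tri_ext {N : ℕ} (hN : 2 ≤ N) (D : Polynomial ℤ) (hdeg : D.natDegree = N)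
    (k : ℕ) (hk1 : 0 < k) (hk2 : k < N) (a b c : ℤ)
    (hz : ∀ j, 0 < j → j < N → j ≠ k → D.coeff j = 0)
    (h0 : D.coeff 0 = c) (hkv : D.coeff k = b) (hNv : D.coeff N = a) :
    D = C a * X^N + C b * X^k + C c := by
  ext j
  simp only [coeff_add, coeff_C_mul, coeff_X_pow, coeff_C]
  by_cases hj0 : j = 0
  · subst hj0
    rw [if_neg (by omega), if_neg (by omega), if_pos rfl, h0]; ring
  · by_cases hjN : j = N
    · subst hjN
      rw [if_pos rfl, if_neg (by omega), if_neg (by omega), hNv]; ring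
    · by_cases hjk : j = k
      · subst hjk
        rw [if_neg (by omega), if_pos rfl, if_neg (by omega), hkv]; ring
      · rw [if_neg (by omega), if_neg (by omega), if_neg (by omega)]
        by_cases hbig : N < j
        · rw [coeff_eq_zero_of_natDegree_lt (hdeg ▸ hbig)]; ring
        · rw [hz j (by omega) (by omega) hjk]; ring

set_option maxHeartbeats 1000000 in
lemma rigid {N : ℕ} (hN : 2 ≤ N) (D : Polynomial ℤ)
    (h : D * D.reverse = PnT N * (PnT N).reverse) :
    D = PnT N ∨ D = -PnT N ∨ D = (PnT N).reverse ∨ D = -(PnT N).reverse := by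
  -- constant coefficient
  have h0 : D.coeff 0 * D.leadingCoeff = -1 := by
    have hc := congrArg (fun q => Polynomial.coeff q 0) h
    simp only [coeff_mul_reverse_zero] at hc
    rw [leadingCoeff_PnT hN, coeff_PnT (by omega) 0, if_neg (by omega), if_neg (by omega),
      if_pos rfl] at hc
    rw [hc]; ring
  have hD0 : D.coeff 0 ≠ 0 := fun e => by rw [e, zero_mul] at h0; exact absurd h0 (by norm_num)
  have hDne : D ≠ 0 := fun e => hD0 (by rw [e]; simp)
  have hdegrev : D.reverse.natDegree = D.natDegree := by
    rw [reverse_natDegree, natTrailingDegree_eq_zero.2 (Or.inr hD0), Nat.sub_zero]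
  have hPne : PnT N ≠ 0 := PnT_ne_zero hN
  have hP0 : (PnT N).coeff 0 = -1 := by
    rw [coeff_PnT (by omega) 0, if_neg (by omega), if_neg (by omega), if_pos rfl]; ring
  have hPdegrev : (PnT N).reverse.natDegree = N := by
    rw [reverse_natDegree, natTrailingDegree_eq_zero.2 (Or.inr (by rw [hP0]; norm_num)),
      Nat.sub_zero, natDegree_PnT hN]
  have hdeg : D.natDegree = N := by
    have hc := congrArg natDegree h
    rw [natDegree_mul hDne (reverse_eq_zero.ne.2 hDne),
      natDegree_mul hPne (reverse_eq_zero.ne.2 hPne), hdegrev, natDegree_PnT hN,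
      hPdegrev] at hc
    omega
  have hlead : D.leadingCoeff = D.coeff N := by rw [leadingCoeff, hdeg]
  rw [hlead] at h0
  -- sum of squares
  have l1 := coeff_mul_reverse_natDegree D
  rw [hdeg] at l1
  have l2 := coeff_mul_reverse_natDegree (PnT N)
  rw [natDegree_PnT hN] at l2
  have hsq : ∑ i ∈ range (N+1), (D.coeff i)^2 = 3 := by
    rw [← l1, h, l2, sum_sq_PnT hN]
  -- high coefficient
  have l3 := coeff_mul_reverse_high hN hdeg
  have l4 := coeff_mul_reverse_high hN (natDegree_PnT hN)
  have hhigh : D.coeff N * D.coeff 1 + D.coeff (N-1) * D.coeff 0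
      = (if N = 2 then 0 else 1) := by
    rw [← l3, h, l4, coeff_PnT (by omega) N, coeff_PnT (by omega) 1,
      coeff_PnT (by omega) (N-1), hP0]
    simp only [if_pos rfl, if_neg (show ¬(1:ℕ) = N by omega), if_neg (show ¬(1:ℕ) = 0 by omega),
      if_neg (show ¬N-1 = N by omega), if_neg (show ¬N-1 = 0 by omega),
      if_neg (show ¬N = N-1 by omega), if_neg (show ¬N = 0 by omega)]
    by_cases h2 : N = 2
    · rw [if_pos (show (1:ℕ) = N-1 by omega), if_pos h2]; simp
    · rw [if_neg (show ¬(1:ℕ) = N-1 by omega), if_neg h2]; simp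
  -- signs
  have hsgn : (D.coeff N = 1 ∧ D.coeff 0 = -1) ∨ (D.coeff N = -1 ∧ D.coeff 0 = 1) := by
    have hu : IsUnit (D.coeff 0) := IsUnit.of_mul_eq_one (-(D.coeff N))
      (by rw [mul_neg, h0]; ring)
    rcases Int.isUnit_iff.1 hu with h1 | h1
    · right
      constructor
      · rw [h1, one_mul] at h0; linarith
      · exact h1
    · left
      constructor
      · rw [h1] at h0; linarith
      · exact h1
  -- middle sum
  have hd0sq : (D.coeff 0)^2 = 1 := by rcases hsgn with ⟨_, e⟩ | ⟨_, e⟩ <;> rw [e] <;> ring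
  have hdNsq : (D.coeff N)^2 = 1 := by rcases hsgn with ⟨e, _⟩ | ⟨e, _⟩ <;> rw [e] <;> ring
  have hdecomp : range (N+1) = insert 0 (insert N (Ioo 0 N)) := by
    ext x; simp only [mem_range, mem_insert, mem_Ioo]; omega
  have hmid : ∑ i ∈ Ioo 0 N, (D.coeff i)^2 = 1 := by
    rw [hdecomp, Finset.sum_insert (by simp; omega), Finset.sum_insert (by simp)] at hsq
    linarith
  -- zero extraction helper
  have hzero : ∀ k, k ∈ Ioo 0 N → (D.coeff k)^2 = 1 →
      ∀ j, 0 < j → j < N → j ≠ k → D.coeff j = 0 := by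
    intro k hkmem hks j hj1 hj2 hjk
    have hs : ∑ i ∈ (Ioo 0 N).erase k, (D.coeff i)^2 = 0 := by
      have hmid' := hmid
      rw [← Finset.insert_erase hkmem,
        Finset.sum_insert (Finset.notMem_erase k (Ioo 0 N))] at hmid'
      linarith
    have hj := (Finset.sum_eq_zero_iff_of_nonneg
      (fun i _ => sq_nonneg (D.coeff i))).1 hs j
      (Finset.mem_erase.2 ⟨hjk, by rw [mem_Ioo]; exact ⟨hj1, hj2⟩⟩)
    exact (pow_eq_zero_iff (by norm_num : (2:ℕ) ≠ 0)).mp hj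
  -- PnT as trinomial
  have ePn : PnT N = C 1 * X^N + C (-1) * X^(N-1) + C (-1) := by
    simp only [PnT, map_one, map_neg, one_mul, neg_mul]; ring
  have ePnrev : -(PnT N).reverse = C 1 * X^N + C 1 * X^1 + C (-1) := by
    rw [reverse_PnT hN]; simp only [map_one, map_neg, one_mul]; ring
  have eNegPn : -PnT N = C (-1) * X^N + C 1 * X^(N-1) + C 1 := by
    rw [ePn]; simp only [map_one, map_neg, one_mul, neg_mul]; ring
  have ePnrev' : (PnT N).reverse = C (-1) * X^N + C (-1) * X^1 + C 1 := by
    rw [reverse_PnT hN]; simp only [map_one, map_neg, one_mul, neg_mul]; ring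
  -- case analysis
  by_cases hN2 : N = 2
  · subst hN2
    have hmid1 : (D.coeff 1)^2 = 1 := by
      have he : (Ioo 0 2 : Finset ℕ) = {1} := by decide
      rw [he, Finset.sum_singleton] at hmid; exact hmid
    have h1v : D.coeff 1 = 1 ∨ D.coeff 1 = -1 :=
      Int.isUnit_iff.1 (IsUnit.of_mul_eq_one (D.coeff 1) (by rw [← pow_two]; exact hmid1))
    have hzz := hzero 1 (by simp) hmid1
    have hN1 : (2:ℕ) - 1 = 1 := rfl
    rcases hsgn with ⟨ha, hc⟩ | ⟨ha, hc⟩ <;> rcases h1v with hb | hb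
    · right; right; right
      rw [ePnrev]
      exact tri_ext hN D hdeg 1 one_pos (by omega) 1 1 (-1) hzz hc hb ha
    · left
      rw [ePn, hN1]
      exact tri_ext hN D hdeg 1 one_pos (by omega) 1 (-1) (-1) hzz hc hb ha
    · right; left
      rw [eNegPn, hN1]
      exact tri_ext hN D hdeg 1 one_pos (by omega) (-1) 1 1 hzz hc hb ha
    · right; right; left
      rw [ePnrev']
      exact tri_ext hN D hdeg 1 one_pos (by omega) (-1) (-1) 1 hzz hc hb ha
  · have hN3 : 3 ≤ N := by omega
    rw [if_neg hN2] at hhigh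
    have hsub2 : (D.coeff 1)^2 + (D.coeff (N-1))^2 ≤ 1 := by
      have hpair : ({1, N-1} : Finset ℕ) ⊆ Ioo 0 N := by
        intro x hx; simp only [mem_insert, mem_singleton] at hx; rw [mem_Ioo]; omega
      have := Finset.sum_le_sum_of_subset_of_nonneg hpair
        (fun i _ _ => sq_nonneg (D.coeff i))
      rw [Finset.sum_pair (by omega : (1:ℕ) ≠ N-1), hmid] at this
      exact this
    by_cases hd1 : D.coeff 1 = 0
    · -- k = N-1 : D = ± PnT
      rw [hd1, mul_zero, zero_add] at hhigh
      rcases hsgn with ⟨ha, hc⟩ | ⟨ha, hc⟩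
      · left
        have hb : D.coeff (N-1) = -1 := by rw [hc, mul_neg_one] at hhigh; linarith
        rw [ePn]
        exact tri_ext hN D hdeg (N-1) (by omega) (by omega) 1 (-1) (-1)
          (hzero (N-1) (by rw [mem_Ioo]; omega) (by rw [hb]; ring)) hc hb ha
      · right; left
        have hb : D.coeff (N-1) = 1 := by rw [hc, mul_one] at hhigh; linarith
        rw [eNegPn]
        exact tri_ext hN D hdeg (N-1) (by omega) (by omega) (-1) 1 1
          (hzero (N-1) (by rw [mem_Ioo]; omega) (by rw [hb]; ring)) hc hb ha
    · -- k = 1 : D = ∓ reverse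
      have h1sq : 1 ≤ (D.coeff 1)^2 := by
        rw [← sq_abs]
        have habs := Int.one_le_abs hd1
        nlinarith [habs]
      have hdN1 : D.coeff (N-1) = 0 := by nlinarith [sq_nonneg (D.coeff (N-1))]
      rw [hdN1, zero_mul, add_zero] at hhigh
      rcases hsgn with ⟨ha, hc⟩ | ⟨ha, hc⟩
      · right; right; right
        have hb : D.coeff 1 = 1 := by rw [ha, one_mul] at hhigh; linarith
        rw [ePnrev]
        exact tri_ext hN D hdeg 1 one_pos (by omega) 1 1 (-1)
          (hzero 1 (by rw [mem_Ioo]; omega) (by rw [hb]; ring)) hc hb ha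
      · right; right; left
        have hb : D.coeff 1 = -1 := by rw [ha, neg_one_mul] at hhigh; linarith
        rw [ePnrev']
        exact tri_ext hN D hdeg 1 one_pos (by omega) (-1) (-1) 1
          (hzero 1 (by rw [mem_Ioo]; omega) (by rw [hb]; ring)) hc hb ha



lemma Titer_nonneg (β : ℝ) (hβ : 1 < β) : ∀ j, 0 ≤ Titer β j
  | 0 => zero_le_one
  | j + 1 => Int.fract_nonneg _

lemma tdigit_nonneg (β : ℝ) (hβ : 1 < β) : ∀ i, 0 ≤ tdigit β i
  | 0 => le_refl 0
  | i + 1 => by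
      show (0:ℤ) ≤ ⌊β * Titer β i⌋
      rw [Int.le_floor]
      push_cast
      exact mul_nonneg (by linarith) (Titer_nonneg β hβ i)

lemma tdigit_one (β : ℝ) (hβ : 1 < β) : 1 ≤ tdigit β 1 := by
  show (1:ℤ) ≤ ⌊β * Titer β 0⌋
  rw [Int.le_floor]
  push_cast
  show (1:ℝ) ≤ β * 1
  linarith

-- coefficients of digit sums
lemma coeff_digit_sum (t : ℕ → ℤ) (m j : ℕ) :
    (∑ i ∈ Finset.Icc 1 m, C (t i) * X ^ (m - i)).coeff j
      = if j < m then t (m - j) else 0 := by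
  rw [finset_sum_coeff]
  simp only [coeff_C_mul, coeff_X_pow, mul_ite, mul_one, mul_zero]
  split_ifs with hj
  · rw [Finset.sum_eq_single_of_mem (m - j) (Finset.mem_Icc.mpr (by omega))]
    · rw [if_pos (by omega)]
    · intro i hi hine
      rw [Finset.mem_Icc] at hi
      rw [if_neg (by omega)]
  · apply Finset.sum_eq_zero
    intro i hi
    rw [Finset.mem_Icc] at hi
    rw [if_neg (by omega)]

lemma coeff_simpleParryPoly (β : ℝ) (m j : ℕ) :
    (simpleParryPoly β m).coeff j
      = (if j = m then 1 else 0) - (if j < m then tdigit β (m - j) else 0) := by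
  rw [simpleParryPoly, coeff_sub, coeff_X_pow, coeff_digit_sum]

lemma natDegree_simpleParryPoly (β : ℝ) (m : ℕ) (hm : 1 ≤ m) :
    (simpleParryPoly β m).natDegree = m := by
  apply le_antisymm
  · apply natDegree_le_iff_coeff_eq_zero.2
    intro j hj
    rw [coeff_simpleParryPoly, if_neg (by omega), if_neg (by omega)]; ring
  · apply le_natDegree_of_ne_zero
    rw [coeff_simpleParryPoly, if_pos rfl, if_neg (by omega)]; norm_num

lemma coeff_nonsimpleParryPoly (β : ℝ) (m p j : ℕ) :
    (nonsimpleParryPoly β m p).coeff j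
      = (if j = m+p+1 then 1 else 0) - (if j < m+p+1 then tdigit β (m+p+1 - j) else 0)
        - (if j = m then 1 else 0) + (if j < m then tdigit β (m - j) else 0) := by
  rw [nonsimpleParryPoly, coeff_add, coeff_sub, coeff_sub, coeff_X_pow, coeff_X_pow,
    coeff_digit_sum, coeff_digit_sum]

lemma natDegree_nonsimpleParryPoly (β : ℝ) (m p : ℕ) :
    (nonsimpleParryPoly β m p).natDegree = m+p+1 := by
  apply le_antisymm
  · apply natDegree_le_iff_coeff_eq_zero.2
    intro j hj
    rw [coeff_nonsimpleParryPoly, if_neg (by omega), if_neg (by omega), if_neg (by omega),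
      if_neg (by omega)]; ring
  · apply le_natDegree_of_ne_zero
    rw [coeff_nonsimpleParryPoly, if_pos rfl, if_neg (by omega), if_neg (by omega),
      if_neg (by omega)]; norm_num

lemma sq_ge_one {x : ℤ} (hx : 1 ≤ x) : 1 ≤ x^2 := by nlinarith

lemma rest_zero {s t : Finset ℕ} (hts : t ⊆ s) (f : ℕ → ℤ)
    (hnn : ∀ j, 0 ≤ f j) (htot : ∑ j ∈ s, f j ≤ 3) (hbig : 3 ≤ ∑ j ∈ t, f j) :
    (∀ j ∈ s, j ∉ t → f j = 0) ∧ ∑ j ∈ t, f j = 3 := by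
  have hsd := Finset.sum_sdiff (f := f) hts
  have hr : 0 ≤ ∑ j ∈ s \ t, f j := Finset.sum_nonneg fun i _ => hnn i
  have hrest0 : ∑ j ∈ s \ t, f j = 0 := by linarith
  exact ⟨fun j hj hjt => (Finset.sum_eq_zero_iff_of_nonneg (fun i _ => hnn i)).1 hrest0 j
    (Finset.mem_sdiff.2 ⟨hj, hjt⟩), by linarith⟩

lemma sum_pair_triple (f : ℕ → ℤ) (a b c : ℕ) (hab : a ≠ b) (hac : a ≠ c) (hbc : b ≠ c) :
    ∑ j ∈ ({a, b, c} : Finset ℕ), f j = f a + f b + f c := by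
  rw [Finset.sum_insert (by simp [hab, hac]), Finset.sum_insert (by simp [hbc]),
    Finset.sum_singleton]; ring

lemma sq_zero {x : ℤ} (h : x^2 = 0) : x = 0 := by nlinarith [sq_nonneg x]

lemma parry_poly_eq (β : ℝ) (P : Polynomial ℤ) (hP : IsParryPolyOf β P)
    (hsum : ∑ j ∈ Finset.range (P.natDegree + 1), (P.coeff j)^2 ≤ 3)
    (hroot : Polynomial.aeval β P = 0) :
    ∃ N, 2 ≤ N ∧ P = PnT N := by
  obtain ⟨hβ, -, hcase⟩ := hP
  have hts := tdigit_nonneg β hβ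
  have ht1 := tdigit_one β hβ
  rcases hcase with ⟨m, hm1, hmne, -, rfl⟩ | ⟨-, m, p, hper, -, hminm, rfl⟩
  · -- simple case
    rw [natDegree_simpleParryPoly β m hm1] at hsum
    have htm : 1 ≤ tdigit β m := lt_of_le_of_ne (hts m) (Ne.symm hmne)
    by_cases hm2 : m = 1
    · -- excluded : β would be 1
      exfalso
      subst hm2
      have c0 : (simpleParryPoly β 1).coeff 0 = -(tdigit β 1) := by
        rw [coeff_simpleParryPoly, if_neg (by omega), if_pos (by omega)]
        norm_num
      have c1 : (simpleParryPoly β 1).coeff 1 = 1 := by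
        rw [coeff_simpleParryPoly, if_pos rfl, if_neg (by omega)]
        norm_num
      have hsum2 : (tdigit β 1)^2 + 1 ≤ 3 := by
        have : ∑ j ∈ Finset.range 2, ((simpleParryPoly β 1).coeff j)^2
            = (tdigit β 1)^2 + 1 := by
          rw [Finset.sum_range_succ, Finset.sum_range_one, c0, c1]; ring
        linarith [hsum, this.symm.le]
      have ht11 : tdigit β 1 = 1 := by nlinarith
      have hPe : simpleParryPoly β 1 = X - 1 := by
        rw [simpleParryPoly, Finset.Icc_self, Finset.sum_singleton, ht11]
        simp
      rw [hPe] at hroot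
      simp only [map_sub, aeval_X, map_one] at hroot
      linarith
    · -- m ≥ 2 : P = X^m - X^(m-1) - 1
      have hm2' : 2 ≤ m := by omega
      refine ⟨m, hm2', ?_⟩
      have c0 : (simpleParryPoly β m).coeff 0 = -(tdigit β m) := by
        rw [coeff_simpleParryPoly, if_neg (by omega), if_pos (by omega), Nat.sub_zero]
        ring
      have cm1 : (simpleParryPoly β m).coeff (m-1) = -(tdigit β 1) := by
        rw [coeff_simpleParryPoly, if_neg (by omega), if_pos (by omega),
          show m - (m-1) = 1 by omega]
        ring
      have cm : (simpleParryPoly β m).coeff m = 1 := by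
        rw [coeff_simpleParryPoly, if_pos rfl, if_neg (by omega)]
        ring
      have htsub : ({0, m-1, m} : Finset ℕ) ⊆ Finset.range (m+1) := by
        intro x hx; simp only [Finset.mem_insert, Finset.mem_singleton] at hx
        rw [Finset.mem_range]; omega
      have hpair := sum_pair_triple (fun j => ((simpleParryPoly β m).coeff j)^2)
        0 (m-1) m (by omega) (by omega) (by omega)
      have hbig : 3 ≤ ∑ j ∈ ({0, m-1, m} : Finset ℕ),
          ((simpleParryPoly β m).coeff j)^2 := by
        rw [hpair]
        simp only [c0, cm1, cm]
        have h1 := sq_ge_one ht1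
        have h2 := sq_ge_one htm
        have e1 : (-(tdigit β m))^2 = (tdigit β m)^2 := by ring
        have e2 : (-(tdigit β 1))^2 = (tdigit β 1)^2 := by ring
        rw [e1, e2]; norm_num; linarith
      obtain ⟨hz, heq3⟩ := rest_zero htsub _ (fun j => sq_nonneg _) hsum hbig
      rw [hpair] at heq3
      simp only [c0, cm1, cm] at heq3
      have ht1e : tdigit β 1 = 1 := by nlinarith [sq_ge_one ht1, sq_ge_one htm]
      have htme : tdigit β m = 1 := by nlinarith [sq_ge_one ht1, sq_ge_one htm]
      ext j
      rw [coeff_PnT (by omega)]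
      by_cases hj0 : j = 0
      · subst hj0
        rw [c0, htme, if_neg (by omega), if_neg (by omega), if_pos rfl]; ring
      · by_cases hjm : j = m
        · subst hjm
          rw [cm, if_pos rfl, if_neg (by omega), if_neg (by omega)]; ring
        · by_cases hjm1 : j = m-1
          · subst hjm1
            rw [cm1, ht1e, if_neg (by omega), if_pos rfl, if_neg (by omega)]; ring
          · rw [if_neg (by omega), if_neg (by omega), if_neg (by omega)]
            by_cases hbig' : m < j
            · exact coeff_eq_zero_of_natDegree_lt
                (by rw [natDegree_simpleParryPoly β m hm1]; omega)
            · exact sq_zero (hz j (Finset.mem_range.2 (by omega))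
                (by simp only [Finset.mem_insert, Finset.mem_singleton]; push_neg
                    exact ⟨hj0, hjm1, hjm⟩))
  · -- nonsimple case
    rw [natDegree_nonsimpleParryPoly β m p] at hsum
    have cn : (nonsimpleParryPoly β m p).coeff (m+p+1) = 1 := by
      rw [coeff_nonsimpleParryPoly, if_pos rfl, if_neg (by omega), if_neg (by omega),
        if_neg (by omega)]
      ring
    by_cases hp : p = 0
    · -- excluded by norm
      exfalso
      subst hp
      have cm : (nonsimpleParryPoly β m 0).coeff m = -(tdigit β 1) - 1 := by
        rw [coeff_nonsimpleParryPoly, if_neg (by omega), if_pos (by omega),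
          if_pos rfl, if_neg (by omega), show m+0+1-m = 1 by omega]
        ring
      have htsub : ({m, m+0+1} : Finset ℕ) ⊆ Finset.range (m+0+1+1) := by
        intro x hx; simp only [Finset.mem_insert, Finset.mem_singleton] at hx
        rw [Finset.mem_range]; omega
      have hle := Finset.sum_le_sum_of_subset_of_nonneg htsub
        (fun i _ _ => sq_nonneg ((nonsimpleParryPoly β m 0).coeff i))
      rw [Finset.sum_pair (by omega : m ≠ m+0+1), cm, cn] at hle
      nlinarith [hle, hsum, ht1]
    · -- p ≥ 1
      have hp1 : 1 ≤ p := by omega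
      have cn1 : (nonsimpleParryPoly β m p).coeff (m+p) = -(tdigit β 1) := by
        rw [coeff_nonsimpleParryPoly, if_neg (by omega), if_pos (by omega),
          if_neg (by omega), if_neg (by omega), show m+p+1-(m+p) = 1 by omega]
        ring
      have cm : (nonsimpleParryPoly β m p).coeff m = -(tdigit β (p+1)) - 1 := by
        rw [coeff_nonsimpleParryPoly, if_neg (by omega), if_pos (by omega),
          if_pos rfl, if_neg (by omega), show m+p+1-m = p+1 by omega]
        ring
      have htsub : ({m, m+p, m+p+1} : Finset ℕ) ⊆ Finset.range (m+p+1+1) := by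
        intro x hx; simp only [Finset.mem_insert, Finset.mem_singleton] at hx
        rw [Finset.mem_range]; omega
      have hpair := sum_pair_triple (fun j => ((nonsimpleParryPoly β m p).coeff j)^2)
        m (m+p) (m+p+1) (by omega) (by omega) (by omega)
      have hbig : 3 ≤ ∑ j ∈ ({m, m+p, m+p+1} : Finset ℕ),
          ((nonsimpleParryPoly β m p).coeff j)^2 := by
        rw [hpair]
        simp only [cm, cn1, cn]
        nlinarith [sq_ge_one ht1, hts (p+1)]
      obtain ⟨hz, heq3⟩ := rest_zero htsub _ (fun j => sq_nonneg _) hsum hbig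
      rw [hpair] at heq3
      simp only [cm, cn1, cn] at heq3
      have ht1e : tdigit β 1 = 1 := by nlinarith [sq_ge_one ht1, hts (p+1)]
      have htpe : tdigit β (p+1) = 0 := by nlinarith [sq_ge_one ht1, hts (p+1)]
      by_cases hm : m = 0
      · -- P = X^(p+1) - X^p - 1
        subst hm
        refine ⟨p+1, by omega, ?_⟩
        simp only [Nat.zero_add] at cn cn1 cm hz hsum
        ext j
        rw [coeff_PnT (by omega)]
        by_cases hj0 : j = 0
        · subst hj0
          rw [cm, htpe, if_neg (by omega), if_neg (by omega), if_pos rfl]; ring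
        · by_cases hjn : j = p+1
          · subst hjn
            rw [cn, if_pos (by omega), if_neg (by omega), if_neg (by omega)]
            ring
          · by_cases hjn1 : j = p
            · rw [hjn1, cn1, ht1e, if_neg (by omega), if_pos (by omega),
                if_neg (by omega)]
              ring
            · rw [if_neg (by omega), if_neg (by omega), if_neg (by omega)]
              by_cases hbig' : p+1 < j
              · exact coeff_eq_zero_of_natDegree_lt
                  (by rw [natDegree_nonsimpleParryPoly β 0 p]; omega)
              · exact sq_zero (hz j (Finset.mem_range.2 (by omega))
                  (by simp only [Finset.mem_insert, Finset.mem_singleton]; push_neg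
                      exact ⟨hj0, by omega, by omega⟩))
      · -- contradiction with minimality of m
        exfalso
        apply hminm 0 (by omega)
        intro i hi
        by_cases him : i ≤ m
        · have hji : m - i ∈ Finset.range (m+p+1+1) := Finset.mem_range.2 (by omega)
          have hnot : m - i ∉ ({m, m+p, m+p+1} : Finset ℕ) := by
            simp only [Finset.mem_insert, Finset.mem_singleton]; push_neg
            refine ⟨by omega, by omega, by omega⟩
          have hcz : (nonsimpleParryPoly β m p).coeff (m-i) = 0 :=
            sq_zero (hz _ hji hnot)
          rw [coeff_nonsimpleParryPoly, if_neg (by omega), if_pos (by omega),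
            if_neg (by omega), if_pos (by omega), show m+p+1-(m-i) = i+(p+1) by omega,
            show m-(m-i) = i by omega] at hcz
          linarith [hcz]
        · exact hper i (by omega)

lemma eval_one_reverse (f : Polynomial ℤ) : f.reverse.eval 1 = f.eval 1 := by
  haveI : Invertible (1:ℤ) := invertibleOne
  have h := eval₂_reflect_mul_pow (RingHom.id ℤ) (1:ℤ) f.natDegree f le_rfl
  rw [one_pow, mul_one, invOf_one] at h
  exact h

/-- If the minimal polynomial `P_β` of the Parry number `β` is non-reciprocal and
`‖n*_β‖₂² ≤ θ₀⁴` (where `θ₀ > 1` is the real root of `X³ - X - 1`), then every monic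
irreducible factor of the complementary factor `n*_β / P_β` is reciprocal. -/
theorem complementary_factor_reciprocal (β : ℝ) (P : Polynomial ℤ)
    (hP : IsParryPolyOf β P)
    (θ₀ : ℝ) (hθ₁ : 1 < θ₀) (hθ : θ₀ ^ 3 = θ₀ + 1)
    (hmin : ¬ (minpoly ℤ β).reverse = minpoly ℤ β)
    (hn2 : polyNorm2 P ^ 2 ≤ θ₀ ^ 4)
    (Cf : Polynomial ℤ) (hC : minpoly ℤ β * Cf = P)
    (g : Polynomial ℤ) (hgm : g.Monic) (hgi : Irreducible g) (hgd : g ∣ Cf) :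
    g.reverse = g := by
  classical
  set A := minpoly ℤ β with hA
  have hroot : Polynomial.aeval β P = 0 := by
    rw [← hC, map_mul, minpoly.aeval, zero_mul]
  -- the ℓ²-bound gives an integer bound 3
  have hsumZ : ∑ j ∈ Finset.range (P.natDegree + 1), (P.coeff j)^2 ≤ 3 := by
    have hnn : (0:ℝ) ≤ ∑ j ∈ Finset.range (P.natDegree + 1), ((P.coeff j : ℝ))^2 :=
      Finset.sum_nonneg fun i _ => sq_nonneg _
    have hsq : polyNorm2 P ^ 2 = ∑ j ∈ Finset.range (P.natDegree + 1), ((P.coeff j : ℝ))^2 :=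
      Real.sq_sqrt hnn
    have hθ0 : 0 < θ₀ := lt_trans zero_lt_one hθ₁
    have hθ2 : θ₀^2 < 2 := by nlinarith
    have hθ4 : θ₀^4 < 4 := by nlinarith [sq_nonneg θ₀]
    have h4 : (∑ j ∈ Finset.range (P.natDegree + 1), ((P.coeff j:ℝ))^2) < 4 := by
      rw [← hsq]; linarith
    have hcast : ((∑ j ∈ Finset.range (P.natDegree + 1), (P.coeff j)^2 : ℤ):ℝ)
        = ∑ j ∈ Finset.range (P.natDegree + 1), ((P.coeff j : ℝ))^2 := by
      push_cast; rfl
    have hZ4 : (∑ j ∈ Finset.range (P.natDegree + 1), (P.coeff j)^2 : ℤ) < 4 := by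
      exact_mod_cast hcast ▸ h4
    omega
  obtain ⟨N, hN, hPeq⟩ := parry_poly_eq β P hP hsumZ hroot
  subst hPeq
  -- set up the three polynomials
  obtain ⟨Cq, hCq⟩ := hgd
  rw [hCq] at hC
  have hABC : A * g * Cq = PnT N := by rw [← hC]; ring
  have hPne : PnT N ≠ 0 := PnT_ne_zero hN
  -- coefficient-0 facts
  have hc0 : A.coeff 0 * g.coeff 0 * Cq.coeff 0 = -1 := by
    have h := congrArg (fun q => Polynomial.coeff q 0) hABC
    simp only [mul_coeff_zero] at h
    rw [coeff_PnT (by omega) 0, if_neg (by omega), if_neg (by omega), if_pos rfl] at h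
    linarith
  have hA0 : A.coeff 0 ≠ 0 := fun e => by rw [e] at hc0; simp at hc0
  have hB0 : g.coeff 0 ≠ 0 := fun e => by rw [e] at hc0; simp at hc0
  have hC0 : Cq.coeff 0 ≠ 0 := fun e => by rw [e] at hc0; simp at hc0
  -- eval-1 facts
  have he1 : A.eval 1 * g.eval 1 * Cq.eval 1 = -1 := by
    have h := congrArg (fun q => Polynomial.eval 1 q) hABC
    simp only [eval_mul] at h
    rw [show (PnT N).eval 1 = -1 by simp [PnT]] at h
    exact h
  have hA1 : A.eval 1 ≠ 0 := fun e => by rw [e] at he1; simp at he1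
  have hB1 : g.eval 1 ≠ 0 := fun e => by rw [e] at he1; simp at he1
  have hC1 : Cq.eval 1 ≠ 0 := fun e => by rw [e] at he1; simp at he1
  -- nonzeroness
  have hAne : A ≠ 0 := fun e => hA0 (by rw [e]; simp)
  have hBne : g ≠ 0 := fun e => hB0 (by rw [e]; simp)
  have hCne : Cq ≠ 0 := fun e => hC0 (by rw [e]; simp)
  have hArne : A.reverse ≠ 0 := fun e => hAne (reverse_eq_zero.1 e)
  have hBrne : g.reverse ≠ 0 := fun e => hBne (reverse_eq_zero.1 e)
  -- reverse of the product
  have hPrev : (PnT N).reverse = A.reverse * g.reverse * Cq.reverse := by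
    rw [← hABC, reverse_mul_of_domain, reverse_mul_of_domain]
  -- the three flips
  have hDid : (A.reverse * g * Cq) * (A.reverse * g * Cq).reverse
      = PnT N * (PnT N).reverse := by
    rw [reverse_mul_of_domain, reverse_mul_of_domain, my_reverse_reverse A hA0,
      hPrev, ← hABC]
    ring
  have hEid : (A * g.reverse * Cq) * (A * g.reverse * Cq).reverse
      = PnT N * (PnT N).reverse := by
    rw [reverse_mul_of_domain, reverse_mul_of_domain, my_reverse_reverse g hB0,
      hPrev, ← hABC]
    ring
  have hFid : (A.reverse * g.reverse * Cq) * (A.reverse * g.reverse * Cq).reverse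
      = PnT N * (PnT N).reverse := by
    rw [reverse_mul_of_domain, reverse_mul_of_domain, my_reverse_reverse A hA0,
      my_reverse_reverse g hB0, hPrev, ← hABC]
    ring
  -- D-analysis : B·C relation
  obtain ⟨e₁, he₁, hBC⟩ : ∃ e : ℤ, (e = 1 ∨ e = -1) ∧
      g * Cq = C e * (g.reverse * Cq.reverse) := by
    rcases rigid hN _ hDid with h | h | h | h
    · exfalso
      rw [← hABC] at h
      exact hmin (mul_right_cancel₀ hBne (mul_right_cancel₀ hCne h))
    · exfalso
      rw [← hABC] at h
      have h' : A.reverse * g * Cq = (-A) * g * Cq := by linear_combination h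
      have hAr : A.reverse = -A := mul_right_cancel₀ hBne (mul_right_cancel₀ hCne h')
      have := congrArg (Polynomial.eval 1) hAr
      rw [eval_one_reverse, eval_neg] at this
      exact hA1 (by linarith)
    · refine ⟨1, Or.inl rfl, ?_⟩
      rw [hPrev] at h
      have h' : A.reverse * (g * Cq) = A.reverse * (g.reverse * Cq.reverse) := by
        linear_combination h
      rw [mul_left_cancel₀ hArne h']
      simp
    · refine ⟨-1, Or.inr rfl, ?_⟩
      rw [hPrev] at h
      have h' : A.reverse * (g * Cq) = A.reverse * (-(g.reverse * Cq.reverse)) := by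
        linear_combination h
      rw [mul_left_cancel₀ hArne h']
      simp
  -- E-analysis : either done, or A·C relation
  have hEres : g.reverse = g ∨ ∃ e : ℤ, (e = 1 ∨ e = -1) ∧
      A * Cq = C e * (A.reverse * Cq.reverse) := by
    rcases rigid hN _ hEid with h | h | h | h
    · left
      rw [← hABC] at h
      have h' : g.reverse * (A * Cq) = g * (A * Cq) := by linear_combination h
      exact mul_right_cancel₀ (mul_ne_zero hAne hCne) h'
    · exfalso
      rw [← hABC] at h
      have h' : g.reverse * (A * Cq) = (-g) * (A * Cq) := by linear_combination h
      have hBr : g.reverse = -g := mul_right_cancel₀ (mul_ne_zero hAne hCne) h'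
      have := congrArg (Polynomial.eval 1) hBr
      rw [eval_one_reverse, eval_neg] at this
      exact hB1 (by linarith)
    · right
      refine ⟨1, Or.inl rfl, ?_⟩
      rw [hPrev] at h
      have h' : (A * Cq) * g.reverse = (A.reverse * Cq.reverse) * g.reverse := by
        linear_combination h
      rw [mul_right_cancel₀ hBrne h']
      simp
    · right
      refine ⟨-1, Or.inr rfl, ?_⟩
      rw [hPrev] at h
      have h' : (A * Cq) * g.reverse = (-(A.reverse * Cq.reverse)) * g.reverse := by
        linear_combination h
      rw [mul_right_cancel₀ hBrne h']
      simp
  rcases hEres with hdone | ⟨e₂, he₂, hAC⟩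
  · exact hdone
  -- final step : from C = C.reverse conclude
  have final : Cq = Cq.reverse → g.reverse = g := by
    intro hCC
    rcases he₁ with rfl | rfl
    · have h' : g * Cq = g.reverse * Cq := by
        rw [hBC, ← hCC]; simp
      exact (mul_right_cancel₀ hCne h').symm
    · exfalso
      have h' : g * Cq = (-g.reverse) * Cq := by
        rw [hBC, ← hCC]; simp
      have hBr : g = -g.reverse := mul_right_cancel₀ hCne h'
      have := congrArg (Polynomial.eval 1) hBr
      rw [eval_neg, eval_one_reverse] at this
      exact hB1 (by linarith)
  -- F-analysis
  rcases rigid hN _ hFid with h | h | h | h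
  -- F = PnT : A'B' = AB, combine
  case _ =>
    rw [← hABC] at h
    have hABr : A.reverse * g.reverse = A * g :=
      mul_right_cancel₀ hCne h
    -- multiply the two relations
    have hkey : (A * g) * (Cq * Cq) = C (e₁ * e₂) * ((A * g) * (Cq.reverse * Cq.reverse)) := by
      have expand : (g * Cq) * (A * Cq)
          = (C e₁ * (g.reverse * Cq.reverse)) * (C e₂ * (A.reverse * Cq.reverse)) := by
        rw [← hBC, ← hAC]
      calc (A * g) * (Cq * Cq) = (g * Cq) * (A * Cq) := by ring
        _ = (C e₁ * (g.reverse * Cq.reverse)) * (C e₂ * (A.reverse * Cq.reverse)) := expand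
        _ = C (e₁ * e₂) * ((A.reverse * g.reverse) * (Cq.reverse * Cq.reverse)) := by
            rw [map_mul]; ring
        _ = C (e₁ * e₂) * ((A * g) * (Cq.reverse * Cq.reverse)) := by rw [hABr]
    have hsgn : e₁ * e₂ = 1 ∨ e₁ * e₂ = -1 := by
      rcases he₁ with rfl | rfl <;> rcases he₂ with rfl | rfl <;> norm_num
    have hCsq : Cq * Cq = C (e₁ * e₂) * (Cq.reverse * Cq.reverse) :=
      mul_left_cancel₀ (mul_ne_zero hAne hBne) (by linear_combination hkey)
    have heval := congrArg (Polynomial.eval 1) hCsq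
    simp only [eval_mul, eval_C, eval_one_reverse] at heval
    rcases hsgn with hs | hs
    · rw [hs, map_one, one_mul] at hCsq
      have hfac : (Cq - Cq.reverse) * (Cq + Cq.reverse) = 0 := by
        linear_combination hCsq
      rcases mul_eq_zero.1 hfac with hz | hz
      · exact final (sub_eq_zero.1 hz)
      · exfalso
        have hCr : Cq = -Cq.reverse := by linear_combination hz
        have := congrArg (Polynomial.eval 1) hCr
        rw [eval_neg, eval_one_reverse] at this
        exact hC1 (by linarith)
    · exfalso
      rw [hs] at heval
      have : Cq.eval 1 * Cq.eval 1 = 0 := by nlinarith [heval]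
      rcases mul_eq_zero.1 this with hz | hz <;> exact hC1 hz
  -- F = -PnT : also A'B' = -AB, same combination
  case _ =>
    rw [← hABC] at h
    have h' : (A.reverse * g.reverse) * Cq = (-(A * g)) * Cq := by linear_combination h
    have hABr : A.reverse * g.reverse = -(A * g) := mul_right_cancel₀ hCne h'
    have hkey : (A * g) * (Cq * Cq)
        = C (-(e₁ * e₂)) * ((A * g) * (Cq.reverse * Cq.reverse)) := by
      have expand : (g * Cq) * (A * Cq)
          = (C e₁ * (g.reverse * Cq.reverse)) * (C e₂ * (A.reverse * Cq.reverse)) := by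
        rw [← hBC, ← hAC]
      calc (A * g) * (Cq * Cq) = (g * Cq) * (A * Cq) := by ring
        _ = (C e₁ * (g.reverse * Cq.reverse)) * (C e₂ * (A.reverse * Cq.reverse)) := expand
        _ = C (e₁ * e₂) * ((A.reverse * g.reverse) * (Cq.reverse * Cq.reverse)) := by
            rw [map_mul]; ring
        _ = C (-(e₁ * e₂)) * ((A * g) * (Cq.reverse * Cq.reverse)) := by
            rw [hABr, map_neg]; ring
    have hsgn : -(e₁ * e₂) = 1 ∨ -(e₁ * e₂) = -1 := by
      rcases he₁ with rfl | rfl <;> rcases he₂ with rfl | rfl <;> norm_num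
    have hCsq : Cq * Cq = C (-(e₁ * e₂)) * (Cq.reverse * Cq.reverse) :=
      mul_left_cancel₀ (mul_ne_zero hAne hBne) (by linear_combination hkey)
    have heval := congrArg (Polynomial.eval 1) hCsq
    simp only [eval_mul, eval_C, eval_one_reverse] at heval
    rcases hsgn with hs | hs
    · rw [hs, map_one, one_mul] at hCsq
      have hfac : (Cq - Cq.reverse) * (Cq + Cq.reverse) = 0 := by
        linear_combination hCsq
      rcases mul_eq_zero.1 hfac with hz | hz
      · exact final (sub_eq_zero.1 hz)
      · exfalso
        have hCr : Cq = -Cq.reverse := by linear_combination hz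
        have := congrArg (Polynomial.eval 1) hCr
        rw [eval_neg, eval_one_reverse] at this
        exact hC1 (by linarith)
    · exfalso
      rw [hs] at heval
      have : Cq.eval 1 * Cq.eval 1 = 0 := by nlinarith [heval]
      rcases mul_eq_zero.1 this with hz | hz <;> exact hC1 hz
  -- F = PnT.reverse : C = C.reverse
  case _ =>
    rw [hPrev] at h
    have h' : (A.reverse * g.reverse) * Cq = (A.reverse * g.reverse) * Cq.reverse := by
      linear_combination h
    exact final (mul_left_cancel₀ (mul_ne_zero hArne hBrne) h')
  -- F = -PnT.reverse : C = -C.reverse, impossible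
  case _ =>
    exfalso
    rw [hPrev] at h
    have h' : (A.reverse * g.reverse) * Cq = (A.reverse * g.reverse) * (-Cq.reverse) := by
      linear_combination h
    have hCr : Cq = -Cq.reverse := mul_left_cancel₀ (mul_ne_zero hArne hBrne) h'
    have := congrArg (Polynomial.eval 1) hCr
    rw [eval_neg, eval_one_reverse] at this
    exact hC1 (by linarith)


end
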